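/- Let H be a proper handle of a matroid M on E with |H| ≥ 2, H independent, and H containing no coloops of M. Then for any h ∈ H, the set H ∖ {h} is a handle of the contraction matroid M / h, is independent in M / h, and contains no coloops of M / h. -/

import Mathlib

open Classical

/-- A matroid on a finite ground set `E`, presented by its nonempty collection of bases,
which satisfies the basis exchange axiom. -/
structure FinMatroid (α : Type*) [DecidableEq α] where
  E : Finset α
  bases : Finset (Finset α)
  bases_nonempty : bases.Nonempty
  subset_ground : ∀ B ∈ bases, B ⊆ E
  exchange : ∀ B ∈ bases, ∀ B' ∈ bases, ∀ e ∈ B \ B',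
      ∃ f ∈ B' \ B, insert f (B.erase e) ∈ bases

variable {α : Type*} [DecidableEq α]

/-- Independence with respect to a collection `𝓑` of bases: being contained in a basis. -/
def Indep (𝓑 : Finset (Finset α)) (I : Finset α) : Prop := ∃ B ∈ 𝓑, I ⊆ B

/-- The rank of a collection of bases: the (common) cardinality of the bases. -/
def dataRank (𝓑 : Finset (Finset α)) : ℕ := 𝓑.sup Finset.card

/-- The rank of a subset `A`: the maximal size of its intersection with a basis. -/
def dataRankOf (𝓑 : Finset (Finset α)) (A : Finset α) : ℕ := 𝓑.sup fun B => (B ∩ A).card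

/-- Circuits: the minimal dependent subsets of the ground set. -/
def IsCircuit (E : Finset α) (𝓑 : Finset (Finset α)) (C : Finset α) : Prop :=
  C ⊆ E ∧ ¬ Indep 𝓑 C ∧ ∀ D ⊂ C, Indep 𝓑 D

/-- A loop: an element lying in no basis. -/
def IsLoop (𝓑 : Finset (Finset α)) (e : α) : Prop := ∀ B ∈ 𝓑, e ∉ B

/-- A coloop: an element lying in every basis. -/
def IsColoop (𝓑 : Finset (Finset α)) (e : α) : Prop := ∀ B ∈ 𝓑, e ∈ B

/-- A handle: a nonempty subset of the ground set which every circuit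
either avoids entirely or contains entirely. -/
def IsHandle (E : Finset α) (𝓑 : Finset (Finset α)) (H : Finset α) : Prop :=
  H.Nonempty ∧ H ⊆ E ∧ ∀ C, IsCircuit E 𝓑 C → Disjoint H C ∨ H ⊆ C

/-- The rank of a matroid: the common cardinality of its bases. -/
def FinMatroid.rank (M : FinMatroid α) : ℕ := dataRank M.bases

/-- The bases of the deletion matroid `M \ H`: the maximal `M`-independent
subsets of `E ∖ H`. -/
noncomputable def deleteBases (M : FinMatroid α) (H : Finset α) : Finset (Finset α) :=
  ((M.E \ H).powerset.filter fun I => Indep M.bases I).filter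
    fun I => ∀ J ∈ (M.E \ H).powerset, Indep M.bases J → I ⊆ J → I = J

/-- The bases of the contraction matroid `M / H` (for `H` independent):
the sets `B \ H` where `B` is a basis of `M` containing `H`. -/
noncomputable def contractBases (M : FinMatroid α) (H : Finset α) : Finset (Finset α) :=
  (M.bases.filter fun B => H ⊆ B).image fun B => B \ H

/-- `𝓑N` is a quotient of `𝓑M` (on the common ground set `E`):
every circuit of `M` is a union of circuits of `N`. -/
def IsQuotientData (E : Finset α) (𝓑N 𝓑M : Finset (Finset α)) : Prop :=
  ∀ C, IsCircuit E 𝓑M C →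
    ∃ 𝒞 : Finset (Finset α), (∀ D ∈ 𝒞, IsCircuit E 𝓑N D) ∧ C = 𝒞.sup id

/-- The bases of the truncation `τ(M)`: the independent sets of `M`
of cardinality exactly `rank M - 1`. -/
noncomputable def truncBases (M : FinMatroid α) : Finset (Finset α) :=
  M.E.powerset.filter fun I => Indep M.bases I ∧ I.card = M.rank - 1

/-- The matroid basis polynomial `Ψ = ∑_{B basis} x^B`. -/
noncomputable def basisPoly (K : Type*) [CommRing K] (𝓑 : Finset (Finset α)) :
    MvPolynomial α K :=
  ∑ B ∈ 𝓑, ∏ e ∈ B, MvPolynomial.X e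

/-- The multivariate Tutte polynomial
`Z = ∑_{A ⊆ E} p^(rank - rank A) x^A`, an element of `K[p][x_e : e ∈ E]`. -/
noncomputable def tutte (K : Type*) [CommRing K] (E : Finset α) (𝓑 : Finset (Finset α)) :
    MvPolynomial α (Polynomial K) :=
  ∑ A ∈ E.powerset,
    MvPolynomial.C (Polynomial.X ^ (dataRank 𝓑 - dataRankOf 𝓑 A)) * ∏ a ∈ A, MvPolynomial.X a

/-- A polynomial with coefficient function `c` supported on the bases `𝓑`:
`∑_{B ∈ 𝓑} c_B x^B`. -/
noncomputable def msp (K : Type*) [CommRing K] (𝓑 : Finset (Finset α)) (c : Finset α → K) :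
    MvPolynomial α K :=
  ∑ B ∈ 𝓑, MvPolynomial.C (c B) * ∏ e ∈ B, MvPolynomial.X e

/-!
Every circuit of `M / h` is either a circuit `C` of `M` avoiding `h` or a set `C` with
`insert h C` a circuit of `M`. A circuit of the first kind misses `h ∈ H`, hence avoids `H`; one
of the second kind meets `H`, hence contains it; so `H \ {h}` is a handle of `M / h`. For
`x ∈ H \ {h}`, exchanging `x` out of a basis through `H` against a basis avoiding `x` gives a
basis through `h` avoiding `x`, so `x` is no coloop of `M / h`.
-/

lemma Indep.subset {β : Type*} {𝓑 : Finset (Finset β)} {I J : Finset β} (hJ : Indep 𝓑 J)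
    (hIJ : I ⊆ J) : Indep 𝓑 I := by
  obtain ⟨B, hB, hJB⟩ := hJ
  exact ⟨B, hB, hIJ.trans hJB⟩

lemma exists_isCircuit_subset_of_not_indep {β : Type*} {E : Finset β} {𝓑 : Finset (Finset β)}
    {S : Finset β} (hSE : S ⊆ E) (hS : ¬ Indep 𝓑 S) : ∃ C ⊆ S, IsCircuit E 𝓑 C := by
  induction S using Finset.strongInduction with
  | _ S ih =>
    by_cases hmin : ∀ D ⊂ S, Indep 𝓑 D
    · exact ⟨S, subset_rfl, hSE, hS, hmin⟩
    · push Not at hmin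
      obtain ⟨D, hDS, hD⟩ := hmin
      obtain ⟨C, hCD, hC⟩ := ih D hDS (hDS.subset.trans hSE) hD
      exact ⟨C, hCD.trans hDS.subset, hC⟩

namespace FinMatroid

variable {M : FinMatroid α} {h : α}

lemma mem_contractBases_singleton {B' : Finset α} :
    B' ∈ contractBases M {h} ↔ ∃ B ∈ M.bases, h ∈ B ∧ B.erase h = B' := by
  simp [contractBases, Finset.sdiff_singleton_eq_erase, and_assoc]

lemma indep_contract_iff {I : Finset α} (hI : h ∉ I) :
    Indep (contractBases M {h}) I ↔ Indep M.bases (insert h I) := by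
  constructor
  · rintro ⟨_, hB', hIB'⟩
    obtain ⟨B, hB, hhB, rfl⟩ := mem_contractBases_singleton.1 hB'
    exact ⟨B, hB, Finset.insert_subset hhB (hIB'.trans (Finset.erase_subset _ _))⟩
  · rintro ⟨B, hB, hIB⟩
    refine ⟨B.erase h, mem_contractBases_singleton.2 ⟨B, hB, hIB (Finset.mem_insert_self _ _), rfl⟩,
      ?_⟩
    rw [← Finset.erase_insert hI]
    exact Finset.erase_subset_erase _ hIB

lemma isCircuit_or_insert_isCircuit_of_isCircuit_contract (hE : h ∈ M.E) {C : Finset α}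
    (hC : IsCircuit (M.E.erase h) (contractBases M {h}) C) :
    IsCircuit M.E M.bases C ∨ IsCircuit M.E M.bases (insert h C) := by
  obtain ⟨hCE, hCdep, hCmin⟩ := hC
  have hhC : h ∉ C := (Finset.subset_erase.1 hCE).2
  have hdep : ¬ Indep M.bases (insert h C) := fun hi => hCdep ((indep_contract_iff hhC).2 hi)
  obtain ⟨C', hC'C, hC'⟩ := exists_isCircuit_subset_of_not_indep
    (Finset.insert_subset hE (hCE.trans (Finset.erase_subset _ _))) hdep
  -- `C'.erase h ⊆ C` is dependent in `M / h`, so minimality of `C` forces equality.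
  have hC'eq : C'.erase h = C := by
    have hsub : C'.erase h ⊆ C := by
      rw [← Finset.erase_insert hhC]
      exact Finset.erase_subset_erase _ hC'C
    by_contra hne
    have hind := (indep_contract_iff (Finset.notMem_erase h C')).1
      (hCmin _ (Finset.ssubset_iff_subset_ne.2 ⟨hsub, hne⟩))
    exact hC'.2.1 (hind.subset (Finset.insert_erase_subset _ _))
  by_cases hhC' : h ∈ C'
  · right
    rwa [← hC'eq, Finset.insert_erase hhC']
  · left
    rwa [← hC'eq, Finset.erase_eq_of_notMem hhC']

lemma not_isColoop_contract {x : α} (hxh : x ≠ h) (hhx : Indep M.bases {h, x})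
    (hx : ¬ IsColoop M.bases x) : ¬ IsColoop (contractBases M {h}) x := by
  obtain ⟨B₀, hB₀, hhxB₀⟩ := hhx
  have hhB₀ : h ∈ B₀ := hhxB₀ (Finset.mem_insert_self _ _)
  have hxB₀ : x ∈ B₀ := hhxB₀ (Finset.mem_insert_of_mem (Finset.mem_singleton_self _))
  obtain ⟨B₁, hB₁, hxB₁⟩ : ∃ B ∈ M.bases, x ∉ B := by simpa [IsColoop] using hx
  obtain ⟨f, hf, hB₂⟩ := M.exchange B₀ hB₀ B₁ hB₁ x (Finset.mem_sdiff.2 ⟨hxB₀, hxB₁⟩)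
  have hfx : f ≠ x := fun hfx => (Finset.mem_sdiff.1 hf).2 (hfx ▸ hxB₀)
  have hhB₂ : h ∈ insert f (B₀.erase x) :=
    Finset.mem_insert_of_mem (Finset.mem_erase.2 ⟨hxh.symm, hhB₀⟩)
  intro hcol
  have hxB₂ := hcol _ (mem_contractBases_singleton.2 ⟨_, hB₂, hhB₂, rfl⟩)
  simp [hxh, hfx.symm] at hxB₂

end FinMatroid

open FinMatroid

lemma IsHandle.erase_contract {M : FinMatroid α} {H : Finset α} {h : α}
    (hH : IsHandle M.E M.bases H) (hh : h ∈ H) (hne : (H.erase h).Nonempty) :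
    IsHandle (M.E.erase h) (contractBases M {h}) (H.erase h) := by
  obtain ⟨-, hHE, hcirc⟩ := hH
  refine ⟨hne, Finset.erase_subset_erase _ hHE, fun C hC => ?_⟩
  have hhC : h ∉ C := (Finset.subset_erase.1 hC.1).2
  rcases isCircuit_or_insert_isCircuit_of_isCircuit_contract (hHE hh) hC with hC' | hC'
  · refine .inl (Finset.disjoint_of_subset_left (Finset.erase_subset _ _) ?_)
    exact (hcirc C hC').resolve_right fun hHC => hhC (hHC hh)
  · refine .inr ?_
    have hHC := (hcirc _ hC').resolve_left
      (Finset.not_disjoint_iff.2 ⟨h, hh, Finset.mem_insert_self _ _⟩)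
    rw [← Finset.erase_insert hhC]
    exact Finset.erase_subset_erase _ hHC

theorem stmt6_general {α : Type*} [DecidableEq α] (M : FinMatroid α) (H : Finset α)
    (hH : IsHandle M.E M.bases H) (hcard : 2 ≤ H.card)
    (hind : Indep M.bases H) (hco : ∀ h ∈ H, ¬ IsColoop M.bases h)
    (h : α) (hh : h ∈ H) :
    IsHandle (M.E.erase h) (contractBases M {h}) (H.erase h) ∧
    Indep (contractBases M {h}) (H.erase h) ∧
    ∀ x ∈ H.erase h, ¬ IsColoop (contractBases M {h}) x := by
  have hne : (H.erase h).Nonempty := by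
    rw [← Finset.card_pos, Finset.card_erase_of_mem hh]
    omega
  refine ⟨hH.erase_contract hh hne, ?_, fun x hx => ?_⟩
  · rw [indep_contract_iff (Finset.notMem_erase h H), Finset.insert_erase hh]
    exact hind
  · obtain ⟨hxh, hxH⟩ := Finset.mem_erase.1 hx
    exact not_isColoop_contract hxh (hind.subset (Finset.insert_subset hh
      (Finset.singleton_subset_iff.2 hxH))) (hco x hxH)

theorem stmt6 {α : Type*} [DecidableEq α] (M : FinMatroid α) (H : Finset α)
    (hH : IsHandle M.E M.bases H) (hprop : H ≠ M.E) (hcard : 2 ≤ H.card)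
    (hind : Indep M.bases H) (hco : ∀ h ∈ H, ¬ IsColoop M.bases h)
    (h : α) (hh : h ∈ H) :
    IsHandle (M.E.erase h) (contractBases M {h}) (H.erase h) ∧
    Indep (contractBases M {h}) (H.erase h) ∧
    ∀ x ∈ H.erase h, ¬ IsColoop (contractBases M {h}) x :=
  stmt6_general M H hH hcard hind hco h hh
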